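/- arXiv:2212.05312 — 2 statements merged into one kernel-verified Lean document; each statement's English description precedes it below -/
import Mathlib

section
/- For every α > 0, Σ_{n≥1} P( max_{1≤m≤⌊1/H(n)⌋+1} |γ_1^n + ⋯ + γ_m^n − m H(n)| ≥ α ) < ∞, and consequently lim_{n→∞} max_{1≤m≤⌊1/H(n)⌋+1} |γ_1^n + ⋯ + γ_m^n − m H(n)| = 0 almost surely. -/
/-!
For fixed `n`, the centred partial sums `S_m = ∑_{j ≤ m} (γ_j^n - H n)` satisfy Kolmogorov's
maximal inequality, so the `n`-th probability is at most
`(⌊1 / H n⌋ + 1) C β(n)² / α² ≤ C (1 / μ + ∑ β) β(n) / α²`, a summable bound.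
Borel–Cantelli then turns summability into almost sure convergence.

Kolmogorov's inequality is proved by splitting the event according to the first `k` with
`|S_k| ≥ α`: on that piece `A_k`, the variable `1_{A_k} S_k` is independent of the centred
increment `S_M - S_k`, so `α² P(A_k) ≤ ∫_{A_k} S_k² ≤ ∫_{A_k} S_M²`.
-/

open MeasureTheory ProbabilityTheory Filter

lemma biUnion_range_disjointed {α : Type*} (f : ℕ → Set α) (n : ℕ) :
    ⋃ i ∈ Finset.range n, disjointed f i = ⋃ i ∈ Finset.range n, f i := by
  cases n with
  | zero => simp
  | succ n => rw [biUnion_range_succ_disjointed, partialSups_eq_biUnion_range]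

lemma Real.exists_le_of_le_biSup {ι : Type*} {s : Finset ι} {f : ι → ℝ} {a : ℝ} (ha : 0 < a)
    (h : a ≤ ⨆ i ∈ s, f i) : ∃ i ∈ s, a ≤ f i := by
  by_contra! hlt
  obtain ⟨b, hb, hba, hfb⟩ : ∃ b, 0 ≤ b ∧ b < a ∧ ∀ i ∈ s, f i ≤ b := by
    rcases s.eq_empty_or_nonempty with rfl | hs
    · exact ⟨0, le_rfl, ha, by simp⟩
    · exact ⟨max 0 (s.sup' hs f), le_max_left _ _, max_lt ha ((Finset.sup'_lt_iff hs).2 hlt),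
        fun i hi => (Finset.le_sup' f hi).trans (le_max_right _ _)⟩
  exact (h.trans (Real.iSup_le (fun i => Real.iSup_le (hfb i) hb) hb)).not_gt hba

lemma Nat.floor_one_div_add_one_mul_le {x : ℝ} (hx : 0 < x) :
    ((⌊1 / x⌋₊ + 1 : ℕ) : ℝ) * x ≤ 1 + x := by
  have hfloor : (⌊1 / x⌋₊ : ℝ) * x ≤ 1 :=
    (mul_le_mul_of_nonneg_right (Nat.floor_le (by positivity)) hx.le).trans_eq
      (one_div_mul_cancel hx.ne')
  push_cast
  linarith

lemma floor_one_div_mul_add_one_mul_sq_le {b c K : ℝ} (hb : 0 < b) (hc : 0 < c) (hbK : b ≤ K) :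
    ((⌊1 / (b * c)⌋₊ + 1 : ℕ) : ℝ) * b ^ 2 ≤ (1 / c + K) * b :=
  calc ((⌊1 / (b * c)⌋₊ + 1 : ℕ) : ℝ) * b ^ 2
      = b / c * (((⌊1 / (b * c)⌋₊ + 1 : ℕ) : ℝ) * (b * c)) := by field_simp
    _ ≤ b / c * (1 + b * c) := by
      gcongr
      exact Nat.floor_one_div_add_one_mul_le (by positivity)
    _ = b / c + b * b := by field_simp
    _ ≤ b / c + K * b := by gcongr
    _ = (1 / c + K) * b := by ring

lemma measurableSet_disjointed_of_le {α : Type*} {m : MeasurableSpace α} {B : ℕ → Set α}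
    {k : ℕ} (hB : ∀ j ≤ k, MeasurableSet (B j)) : MeasurableSet (disjointed B k) := by
  rw [disjointed_eq_inter_compl]
  exact (hB k le_rfl).inter (.iInter fun j => .iInter fun hj => (hB j hj.le).compl)

namespace ProbabilityTheory

open Finset

variable {Ω : Type*} {mΩ : MeasurableSpace Ω} {μ : Measure Ω}

lemma iIndepFun.indepFun_of_measurable_iSup {ι β γ δ : Type*} {mβ : MeasurableSpace β}
    [MeasurableSpace γ] [MeasurableSpace δ] {X : ι → Ω → β} (hX : ∀ i, Measurable (X i))
    (hind : iIndepFun X μ) {S T : Set ι} (hST : Disjoint S T) {Y : Ω → γ} {Z : Ω → δ}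
    (hY : Measurable[⨆ i ∈ S, mβ.comap (X i)] Y) (hZ : Measurable[⨆ i ∈ T, mβ.comap (X i)] Z) :
    IndepFun Y Z μ := by
  rw [IndepFun_iff_Indep]
  exact indep_of_indep_of_le (indep_iSup_of_disjoint (fun i => (hX i).comap_le)
    ((iIndepFun_iff_iIndep _ _ _).1 hind) hST) hY.comap_le hZ.comap_le

lemma measurable_sum_iSup_comap {ι β : Type*} {mβ : MeasurableSpace β} [AddCommMonoid β]
    [MeasurableAdd₂ β] {X : ι → Ω → β} {S : Set ι} {s : Finset ι} (hs : ↑s ⊆ S) :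
    Measurable[⨆ i ∈ S, mβ.comap (X i)] fun ω => ∑ i ∈ s, X i ω :=
  Finset.measurable_sum _ fun i hi =>
    (comap_measurable (X i)).mono (le_iSup₂ (f := fun i (_ : i ∈ S) => mβ.comap (X i)) i (hs hi))
      le_rfl

lemma setIntegral_sq_le_setIntegral_sq_add {A : Set Ω} (hA : MeasurableSet A) {Y Z : Ω → ℝ}
    (hY : MemLp Y 2 μ) (hZ : MemLp Z 2 μ) (hind : IndepFun (A.indicator Y) Z μ)
    (hZ0 : μ[Z] = 0) :
    ∫ ω in A, Y ω ^ 2 ∂μ ≤ ∫ ω in A, (Y ω + Z ω) ^ 2 ∂μ := by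
  have hcross : ∫ ω in A, Y ω * Z ω ∂μ = 0 := by
    rw [← integral_indicator hA]
    simp_rw [Set.indicator_mul_left]
    rw [← Pi.mul_def, hind.integral_mul_eq_mul_integral (hY.1.indicator hA) hZ.1, hZ0, mul_zero]
  have hYZ : Integrable (fun ω => Y ω * Z ω) μ := hY.integrable_mul hZ
  have hexpand : ∫ ω in A, (Y ω + Z ω) ^ 2 ∂μ
      = ∫ ω in A, Y ω ^ 2 ∂μ + 2 * ∫ ω in A, Y ω * Z ω ∂μ + ∫ ω in A, Z ω ^ 2 ∂μ := by
    simp_rw [add_sq, mul_assoc]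
    rw [integral_add ?_ hZ.integrable_sq.integrableOn, integral_add hY.integrable_sq.integrableOn
      (hYZ.const_mul 2).integrableOn, integral_const_mul]
    exact hY.integrable_sq.integrableOn.add (hYZ.const_mul 2).integrableOn
  have hZsq : 0 ≤ ∫ ω in A, Z ω ^ 2 ∂μ := setIntegral_nonneg hA fun ω _ => sq_nonneg _
  linarith

lemma integral_sq_sum_eq_sum_variance [IsFiniteMeasure μ] {ι : Type*} {X : ι → Ω → ℝ}
    {s : Finset ι} (hL2 : ∀ i ∈ s, MemLp (X i) 2 μ) (hmean : ∀ i ∈ s, μ[X i] = 0)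
    (hind : Set.Pairwise ↑s fun i j => IndepFun (X i) (X j) μ) :
    ∫ ω, (∑ i ∈ s, X i ω) ^ 2 ∂μ = ∑ i ∈ s, Var[X i; μ] := by
  rw [← IndepFun.variance_sum hL2 hind, variance_of_integral_eq_zero]
  · simp
  · exact (memLp_finsetSum' _ hL2).aemeasurable
  · simp only [Finset.sum_apply]
    rw [integral_finsetSum _ fun i hi => (hL2 i hi).integrable one_le_two]
    exact sum_eq_zero hmean

lemma setIntegral_sq_sum_range_le [IsFiniteMeasure μ] {X : ℕ → Ω → ℝ}
    (hX : ∀ i, Measurable (X i)) (hind : iIndepFun X μ) (hL2 : ∀ i, MemLp (X i) 2 μ)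
    (hmean : ∀ i, μ[X i] = 0) {k M : ℕ} (hkM : k ≤ M) {A : Set Ω}
    (hA : MeasurableSet[⨆ i ∈ Set.Iio k, MeasurableSpace.comap (X i) inferInstance] A) :
    ∫ ω in A, (∑ i ∈ range k, X i ω) ^ 2 ∂μ ≤ ∫ ω in A, (∑ i ∈ range M, X i ω) ^ 2 ∂μ := by
  simp_rw [← sum_range_add_sum_Ico _ hkM]
  refine setIntegral_sq_le_setIntegral_sq_add
    (iSup₂_le (fun i _ => (hX i).comap_le) _ hA) (memLp_finsetSum _ fun i _ => hL2 i)
    (memLp_finsetSum _ fun i _ => hL2 i) ?_ ?_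
  · exact hind.indepFun_of_measurable_iSup hX (Set.Iio_disjoint_Ici le_rfl)
      ((measurable_sum_iSup_comap fun i hi => by simpa using hi).indicator hA)
      (measurable_sum_iSup_comap fun i hi => by simpa using (mem_Ico.1 hi).1)
  · rw [integral_finsetSum _ fun i _ => (hL2 i).integrable one_le_two]
    simp [hmean]

theorem kolmogorov_maximal_ineq_of_measurable [IsFiniteMeasure μ] {X : ℕ → Ω → ℝ}
    (hX : ∀ i, Measurable (X i)) (hind : iIndepFun X μ) (hL2 : ∀ i, MemLp (X i) 2 μ)
    (hmean : ∀ i, μ[X i] = 0) (M : ℕ) {α : ℝ} (hα : 0 ≤ α) :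
    α ^ 2 * μ.real {ω | ∃ k < M, α ≤ |∑ i ∈ range (k + 1), X i ω|}
      ≤ ∑ i ∈ range M, Var[X i; μ] := by
  set S : ℕ → Ω → ℝ := fun k ω => ∑ i ∈ range k, X i ω
  set F : ℕ → MeasurableSpace Ω := fun k =>
    ⨆ i ∈ Set.Iio k, MeasurableSpace.comap (X i) inferInstance
  set A := disjointed fun k => {ω | α ≤ |S (k + 1) ω|}
  have hF : ∀ k, F k ≤ mΩ := fun k => iSup₂_le fun i _ => (hX i).comap_le
  have hSF : ∀ j k, j ≤ k → Measurable[F k] (S j) := fun j k hjk =>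
    measurable_sum_iSup_comap fun i hi => by simp at hi ⊢; omega
  have hAF : ∀ k, MeasurableSet[F (k + 1)] (A k) := fun k =>
    measurableSet_disjointed_of_le fun j hj =>
      measurable_abs.comp (hSF (j + 1) (k + 1) (by omega)) measurableSet_Ici
  have hA : ∀ k, MeasurableSet (A k) := fun k => hF _ _ (hAF k)
  have hSL2 : ∀ k, MemLp (S k) 2 μ := fun k => memLp_finsetSum _ fun i _ => hL2 i
  have hpiece : ∀ k < M, α ^ 2 * μ.real (A k) ≤ ∫ ω in A k, S M ω ^ 2 ∂μ := fun k hk =>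
    calc α ^ 2 * μ.real (A k) ≤ ∫ ω in A k, S (k + 1) ω ^ 2 ∂μ := by
          refine setIntegral_ge_of_const_le_real (hA k) (measure_ne_top _ _) (fun ω hω => ?_)
            (hSL2 _).integrable_sq.integrableOn
          rw [← sq_abs (S _ ω)]
          exact pow_le_pow_left₀ hα (disjointed_subset _ k hω) 2
      _ ≤ ∫ ω in A k, S M ω ^ 2 ∂μ := setIntegral_sq_sum_range_le hX hind hL2 hmean hk (hAF k)
  have hdisj : Set.Pairwise ↑(range M) (Function.onFun Disjoint A) :=
    fun i _ j _ hij => disjoint_disjointed _ hij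
  have hunion : {ω | ∃ k < M, α ≤ |S (k + 1) ω|} = ⋃ k ∈ range M, A k := by
    rw [biUnion_range_disjointed]; ext; simp
  calc α ^ 2 * μ.real {ω | ∃ k < M, α ≤ |S (k + 1) ω|}
      = ∑ k ∈ range M, α ^ 2 * μ.real (A k) := by
        rw [hunion, measureReal_biUnion_finset hdisj fun k _ => hA k, mul_sum]
    _ ≤ ∑ k ∈ range M, ∫ ω in A k, S M ω ^ 2 ∂μ :=
        sum_le_sum fun k hk => hpiece k (mem_range.1 hk)
    _ = ∫ ω in ⋃ k ∈ range M, A k, S M ω ^ 2 ∂μ :=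
        (integral_biUnion_finset _ (fun k _ => hA k) hdisj
          fun k _ => (hSL2 M).integrable_sq.integrableOn).symm
    _ ≤ ∫ ω, S M ω ^ 2 ∂μ :=
        setIntegral_le_integral (hSL2 M).integrable_sq (.of_forall fun ω => sq_nonneg _)
    _ = ∑ i ∈ range M, Var[X i; μ] :=
        integral_sq_sum_eq_sum_variance (fun i _ => hL2 i) (fun i _ => hmean i)
          fun i _ j _ hij => hind.indepFun hij

theorem kolmogorov_maximal_ineq [IsFiniteMeasure μ] {X : ℕ → Ω → ℝ}
    (hind : iIndepFun X μ) (hL2 : ∀ i, MemLp (X i) 2 μ) (hmean : ∀ i, μ[X i] = 0) (M : ℕ)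
    {α : ℝ} (hα : 0 ≤ α) :
    α ^ 2 * μ.real {ω | ∃ k < M, α ≤ |∑ i ∈ range (k + 1), X i ω|}
      ≤ ∑ i ∈ range M, Var[X i; μ] := by
  have hXY : ∀ i, X i =ᵐ[μ] (hL2 i).1.mk := fun i => (hL2 i).1.ae_eq_mk
  have hevent : {ω | ∃ k < M, α ≤ |∑ i ∈ range (k + 1), X i ω|}
      =ᵐ[μ] {ω | ∃ k < M, α ≤ |∑ i ∈ range (k + 1), (hL2 i).1.mk _ ω|} := by
    refine eventuallyEq_set.2 ?_
    filter_upwards [ae_all_iff.2 hXY] with ω hω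
    simp only [hω]
  rw [measureReal_congr hevent]
  convert kolmogorov_maximal_ineq_of_measurable
    (fun i => (hL2 i).1.stronglyMeasurable_mk.measurable) (hind.congr hXY)
    (fun i => (hL2 i).ae_eq (hXY i))
    (fun i => (integral_congr_ae (hXY i)).symm.trans (hmean i)) M hα using 2 with i
  exact variance_congr (hXY i)

theorem measureReal_le_biSup_abs_sum_sub_le [IsProbabilityMeasure μ] {γ : ℕ → Ω → ℝ} {h v : ℝ}
    (hind : iIndepFun (fun j => γ (j + 1)) μ) (hL2 : ∀ j, 1 ≤ j → MemLp (γ j) 2 μ)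
    (hmean : ∀ j, 1 ≤ j → μ[γ j] = h) (hvar : ∀ j, 1 ≤ j → Var[γ j; μ] ≤ v) (N : ℕ)
    {α : ℝ} (hα : 0 < α) :
    μ.real {ω | α ≤ ⨆ m ∈ Icc 1 N, |(∑ j ∈ Icc 1 m, γ j ω) - m * h|} ≤ N * v / α ^ 2 := by
  set X : ℕ → Ω → ℝ := fun j ω => γ (j + 1) ω - h
  have hXL2 : ∀ j, MemLp (X j) 2 μ := fun j => (hL2 _ le_add_self).sub (memLp_const h)
  have hXmean : ∀ j, μ[X j] = 0 := fun j => by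
    rw [integral_sub ((hL2 _ le_add_self).integrable one_le_two) (integrable_const h),
      hmean _ le_add_self, integral_const, probReal_univ, one_smul, sub_self]
  have hXvar : ∑ j ∈ range N, Var[X j; μ] ≤ N * v := by
    calc ∑ j ∈ range N, Var[X j; μ] ≤ ∑ _j ∈ range N, v := sum_le_sum fun j _ => by
          rw [variance_sub_const (hL2 _ le_add_self).1]
          exact hvar _ le_add_self
      _ = N * v := by simp
  have hcentred : ∀ m ω, (∑ j ∈ Icc 1 m, γ j ω) - m * h = ∑ j ∈ range m, X j ω := by
    intro m ω
    rw [sum_sub_distrib, ← Ico_add_one_right_eq_Icc, sum_Ico_eq_sum_range]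
    simp [add_comm]
  have hsub : {ω | α ≤ ⨆ m ∈ Icc 1 N, |(∑ j ∈ Icc 1 m, γ j ω) - m * h|}
      ⊆ {ω | ∃ k < N, α ≤ |∑ j ∈ range (k + 1), X j ω|} := by
    intro ω hω
    obtain ⟨m, hm, hαm⟩ := Real.exists_le_of_le_biSup hα hω
    obtain ⟨k, rfl⟩ := Nat.exists_eq_add_of_le' (mem_Icc.1 hm).1
    exact ⟨k, by simp at hm; omega, hcentred _ ω ▸ hαm⟩
  have hXind : iIndepFun X μ := hind.comp (fun _ x => x - h) fun _ => measurable_id.sub_const h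
  have hkol := kolmogorov_maximal_ineq hXind hXL2 hXmean N hα.le
  rw [le_div_iff₀ (by positivity)]
  calc _ ≤ μ.real {ω | ∃ k < N, α ≤ |∑ j ∈ range (k + 1), X j ω|} * α ^ 2 :=
        mul_le_mul_of_nonneg_right (measureReal_mono hsub) (sq_nonneg α)
    _ ≤ N * v := by linarith

lemma ae_tendsto_zero_of_summable_measureReal [IsFiniteMeasure μ] {f : ℕ → Ω → ℝ}
    (hf : ∀ n ω, 0 ≤ f n ω) (hsum : ∀ α, 0 < α → Summable fun n => μ.real {ω | α ≤ f n ω}) :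
    ∀ᵐ ω ∂μ, Tendsto (fun n => f n ω) atTop (nhds 0) := by
  have hsmall : ∀ k : ℕ, ∀ᵐ ω ∂μ, ∀ᶠ n in atTop, f n ω < 1 / (k + 1) := by
    intro k
    have hfin : ∑' n, μ {ω | 1 / (k + 1) ≤ f n ω} ≠ ⊤ := by
      have h := ENNReal.ofReal_tsum_of_nonneg (fun n => measureReal_nonneg)
        (hsum (1 / (k + 1)) (by positivity))
      simp_rw [ofReal_measureReal (measure_ne_top _ _)] at h
      exact h ▸ ENNReal.ofReal_ne_top
    filter_upwards [ae_eventually_notMem hfin] with ω hω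
    simpa using hω
  filter_upwards [ae_all_iff.2 hsmall] with ω hω
  refine tendsto_order.2 ⟨fun a ha => .of_forall fun n => ha.trans_le (hf n ω), fun a ha => ?_⟩
  obtain ⟨k, hk⟩ := exists_nat_one_div_lt ha
  exact (hω k).mono fun n hn => hn.trans hk

end ProbabilityTheory

/-- Let `β : ℕ → (0,∞)` be summable, `μ > 0`, `C > 0`, and
`H n = β n * μ`. For each `n`, let `(γ n j)_{j ≥ 1}` be independent random variables
with mean `H n` and variance at most `C * β n ^ 2`. Then for every `α > 0` the series
`Σ_n P(max_{1 ≤ m ≤ ⌊1/H n⌋ + 1} |γ_1^n + ⋯ + γ_m^n − m H n| ≥ α)` converges, and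
consequently the maxima tend to `0` almost surely. -/
theorem strong_convergence_of_partial_sum_maxima
    {Ω : Type*} [MeasureSpace Ω] [IsProbabilityMeasure (ℙ : Measure Ω)]
    (β : ℕ → ℝ) (hβpos : ∀ n, 0 < β n) (hβsum : Summable β)
    (μ C : ℝ) (hμ : 0 < μ) (hC : 0 < C)
    (H : ℕ → ℝ) (hH : ∀ n, H n = β n * μ)
    (γ : ℕ → ℕ → Ω → ℝ)
    (hindep : ∀ n, iIndepFun (fun j => γ n (j + 1)) ℙ)
    (hmem : ∀ n, ∀ j, 1 ≤ j → MemLp (γ n j) 2 ℙ)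
    (hmean : ∀ n, ∀ j, 1 ≤ j → ∫ ω, γ n j ω ∂ℙ = H n)
    (hvar : ∀ n, ∀ j, 1 ≤ j → variance (γ n j) ℙ ≤ C * β n ^ 2) :
    (∀ α : ℝ, 0 < α →
      Summable fun n =>
        (ℙ {ω | α ≤ ⨆ m ∈ Finset.Icc 1 (⌊1 / H n⌋₊ + 1),
            |(∑ j ∈ Finset.Icc 1 m, γ n j ω) - (m : ℝ) * H n|}).toReal) ∧
    (∀ᵐ ω ∂ℙ, Tendsto (fun n => ⨆ m ∈ Finset.Icc 1 (⌊1 / H n⌋₊ + 1),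
        |(∑ j ∈ Finset.Icc 1 m, γ n j ω) - (m : ℝ) * H n|) atTop (nhds 0)) := by
  set D : ℕ → Ω → ℝ := fun n ω => ⨆ m ∈ Finset.Icc 1 (⌊1 / H n⌋₊ + 1),
    |(∑ j ∈ Finset.Icc 1 m, γ n j ω) - (m : ℝ) * H n|
  have hβK : ∀ n, β n ≤ ∑' k, β k := fun n => hβsum.le_tsum n fun k _ => (hβpos k).le
  have hbound : ∀ α, 0 < α → ∀ n,
      (ℙ {ω | α ≤ D n ω}).toReal ≤ C * (1 / μ + ∑' k, β k) / α ^ 2 * β n := by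
    intro α hα n
    have hNβ := floor_one_div_mul_add_one_mul_sq_le (hβpos n) hμ (hβK n)
    rw [← hH] at hNβ
    calc _ ≤ ((⌊1 / H n⌋₊ + 1 : ℕ) : ℝ) * (C * β n ^ 2) / α ^ 2 :=
          measureReal_le_biSup_abs_sum_sub_le (hindep n) (hmem n) (hmean n) (hvar n) _ hα
      _ = C * (((⌊1 / H n⌋₊ + 1 : ℕ) : ℝ) * β n ^ 2) / α ^ 2 := by ring
      _ ≤ C * ((1 / μ + ∑' k, β k) * β n) / α ^ 2 := by gcongr
      _ = _ := by ring
  have hsummable := fun α (hα : 0 < α) =>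
    Summable.of_nonneg_of_le (fun _ => ENNReal.toReal_nonneg) (hbound α hα) (hβsum.mul_left _)
  refine ⟨hsummable, ae_tendsto_zero_of_summable_measureReal (fun n ω => ?_) hsummable⟩
  exact Real.iSup_nonneg fun m => Real.iSup_nonneg fun _ => abs_nonneg _
end

section
/- There exists a constant K > 0 depending only on q and k such that, setting δ_n = K · n^{q/⌊log n⌋ − k/2} · (⌊log n⌋)^{2 + 1/(2⌊log n⌋)}, one has P( max_{1≤m≤⌊2n^k⌋} | Γ_m^n − m/(2n^k) | > δ_n ) = o(n^{−q}) as n → ∞, where Γ_m^n = γ_1^n + ⋯ + γ_m^n. -/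
open MeasureTheory ProbabilityTheory Filter Asymptotics

/-- The uniform probability distribution on the interval `(a, b)`. -/
noncomputable def uniformIoo (a b : ℝ) : Measure ℝ :=
  (volume (Set.Ioo a b))⁻¹ • volume.restrict (Set.Ioo a b)

/-!
Each `γ_m^n` takes values in an interval of length `n^{-k}` and has mean `n^{-k}/2`, so Hoeffding's
inequality bounds the probability that `|Γ_m^n - m/(2n^k)| ≥ δ` by `2 exp(-2δ²/(m n^{-2k}))`, which
for `m ≤ 2n^k` is at most `2 exp(-δ² n^k)`. A union bound over the `⌊2n^k⌋` indices costs a factor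
`2n^k`. With `K = 1`, `δ_n² n^k ≥ ⌊log n⌋⁴`, which eventually exceeds `(k + q + 1) log n`, so the
probability is at most `4 n^{-q-1} = o(n^{-q})`.
-/

open Real Finset

lemma Finset.sum_Icc_one_eq_sum_range {M : Type*} [AddCommMonoid M] (f : ℕ → M) (m : ℕ) :
    ∑ j ∈ Icc 1 m, f j = ∑ i ∈ range m, f (i + 1) := by
  rw [range_eq_Ico, sum_Ico_add' f, zero_add, Ico_add_one_right_eq_Icc]

namespace MeasureTheory

variable {Ω : Type*} {mΩ : MeasurableSpace Ω} {μ : Measure Ω}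

-- An empty `⨆` in `ℝ` is `0`, hence `0 ≤ δ`.
lemma measureReal_lt_biSup_le_sum {ι : Type*} [IsFiniteMeasure μ] (f : ι → Ω → ℝ)
    (s : Finset ι) {δ : ℝ} (hδ : 0 ≤ δ) :
    μ.real {ω | δ < ⨆ i ∈ s, f i ω} ≤ ∑ i ∈ s, μ.real {ω | δ < f i ω} := by
  refine (measureReal_mono (fun ω hω => ?_) (measure_ne_top _ _)).trans
    (measureReal_biUnion_finset_le s _)
  by_contra h_none
  simp only [Set.mem_iUnion, not_exists, Set.mem_ofPred_eq, not_lt] at h_none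
  exact hω.not_ge (Real.iSup_le (fun i => Real.iSup_le (h_none i) hδ) hδ)

namespace pdf.IsUniform

variable {E : Type*} [MeasurableSpace E] {ν : Measure E}

lemma ae_mem {X : Ω → E} {s : Set E} (hu : IsUniform X s μ ν) (hX : AEMeasurable X μ)
    (hs : MeasurableSet s) : ∀ᵐ ω ∂μ, X ω ∈ s :=
  ae_of_ae_map hX (hu ▸ ae_cond_mem hs)

lemma aemeasurable_of_Ioo {X : Ω → ℝ} {a b : ℝ} (hab : a < b)
    (hu : IsUniform X (Set.Ioo a b) μ) : AEMeasurable X μ :=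
  hu.aemeasurable (by simp [hab]) (by simp)

lemma integral_eq_midpoint {X : Ω → ℝ} {a b : ℝ} (hab : a < b)
    (hu : IsUniform X (Set.Ioo a b) μ) : ∫ ω, X ω ∂μ = (a + b) / 2 := by
  rw [hu.integral_eq, Real.volume_Ioo, ← integral_Ioc_eq_integral_Ioo,
    ← intervalIntegral.integral_of_le hab.le, integral_id, ENNReal.toReal_inv,
    ENNReal.toReal_ofReal (sub_pos.2 hab).le]
  field_simp [(sub_pos.2 hab).ne']
  ring

end pdf.IsUniform

end MeasureTheory

namespace ProbabilityTheory

variable {Ω : Type*} {mΩ : MeasurableSpace Ω} {μ : Measure Ω} {X : ℕ → Ω → ℝ} {a b : ℝ}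

lemma HasSubgaussianMGF.measureReal_abs_sum_range_ge_le_of_iIndepFun (h_indep : iIndepFun X μ)
    {c : NNReal} {m : ℕ} (h_subG : ∀ i < m, HasSubgaussianMGF (X i) c μ) {ε : ℝ} (hε : 0 ≤ ε) :
    μ.real {ω | ε ≤ |∑ i ∈ range m, X i ω|} ≤ 2 * exp (-ε ^ 2 / (2 * m * c)) := by
  have := h_indep.isProbabilityMeasure
  have h_neg : iIndepFun (fun i => -X i) μ := h_indep.comp (fun _ y => -y) fun _ => measurable_neg
  have h_upper := measure_sum_range_ge_le_of_iIndepFun h_indep h_subG hε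
  have h_lower := measure_sum_range_ge_le_of_iIndepFun h_neg (fun i hi => (h_subG i hi).neg) hε
  have h_sub : {ω | ε ≤ |∑ i ∈ range m, X i ω|} ⊆
      {ω | ε ≤ ∑ i ∈ range m, X i ω} ∪ {ω | ε ≤ ∑ i ∈ range m, (-X i) ω} := by
    intro ω hω
    simpa [le_abs] using hω
  calc μ.real {ω | ε ≤ |∑ i ∈ range m, X i ω|}
      ≤ μ.real {ω | ε ≤ ∑ i ∈ range m, X i ω} + μ.real {ω | ε ≤ ∑ i ∈ range m, (-X i) ω} :=
        (measureReal_mono h_sub (by finiteness)).trans (measureReal_union_le _ _)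
    _ ≤ 2 * exp (-ε ^ 2 / (2 * m * c)) := by linarith

lemma measureReal_abs_sum_range_sub_integral_ge_le_of_mem_Icc (h_indep : iIndepFun X μ)
    (h_meas : ∀ i, AEMeasurable (X i) μ) (h_bdd : ∀ i, ∀ᵐ ω ∂μ, X i ω ∈ Set.Icc a b) (m : ℕ)
    {ε : ℝ} (hε : 0 ≤ ε) :
    μ.real {ω | ε ≤ |∑ i ∈ range m, (X i ω - μ[X i])|}
      ≤ 2 * exp (-2 * ε ^ 2 / (m * (b - a) ^ 2)) := by
  have := h_indep.isProbabilityMeasure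
  have h_centered : iIndepFun (fun i ω => X i ω - μ[X i]) μ :=
    h_indep.comp (fun i y => y - ∫ ω, X i ω ∂μ) fun i => measurable_sub_const _
  refine (HasSubgaussianMGF.measureReal_abs_sum_range_ge_le_of_iIndepFun h_centered
    (fun i _ => hasSubgaussianMGF_of_mem_Icc (h_meas i) (h_bdd i)) hε).trans_eq ?_
  push_cast
  rw [div_pow, Real.norm_eq_abs, sq_abs,
    show 2 * (m : ℝ) * ((b - a) ^ 2 / 2 ^ 2) = m * (b - a) ^ 2 / 2 by ring, div_div_eq_mul_div]
  ring_nf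

lemma measureReal_abs_sum_range_sub_ge_le_of_isUniform (h_indep : iIndepFun X μ) (hab : a < b)
    (h_unif : ∀ i, pdf.IsUniform (X i) (Set.Ioo a b) μ) (m : ℕ) {ε : ℝ} (hε : 0 ≤ ε) :
    μ.real {ω | ε ≤ |∑ i ∈ range m, X i ω - m * ((a + b) / 2)|}
      ≤ 2 * exp (-2 * ε ^ 2 / (m * (b - a) ^ 2)) := by
  have h_meas i := (h_unif i).aemeasurable_of_Ioo hab
  have h_bdd i : ∀ᵐ ω ∂μ, X i ω ∈ Set.Icc a b :=
    ((h_unif i).ae_mem (h_meas i) measurableSet_Ioo).mono fun _ h => Set.Ioo_subset_Icc_self h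
  convert measureReal_abs_sum_range_sub_integral_ge_le_of_mem_Icc h_indep h_meas h_bdd m hε
    using 6 with ω
  simp [sum_sub_distrib, (h_unif _).integral_eq_midpoint hab]

lemma measureReal_lt_iSup_abs_sum_sub_le_of_isUniform (h_indep : iIndepFun X μ) (hab : a < b)
    (h_unif : ∀ i, pdf.IsUniform (X i) (Set.Ioo a b) μ) (M : ℕ) {δ : ℝ} (hδ : 0 ≤ δ) :
    μ.real {ω | δ < ⨆ m ∈ Icc 1 M, |∑ i ∈ range m, X i ω - m * ((a + b) / 2)|}
      ≤ 2 * M * exp (-2 * δ ^ 2 / (M * (b - a) ^ 2)) := by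
  have := h_indep.isProbabilityMeasure
  have h_term : ∀ m ∈ Icc 1 M,
      μ.real {ω | δ < |∑ i ∈ range m, X i ω - m * ((a + b) / 2)|}
        ≤ 2 * exp (-2 * δ ^ 2 / (M * (b - a) ^ 2)) := by
    intro m hm
    obtain ⟨hm1, hmM⟩ := mem_Icc.1 hm
    refine (measureReal_mono fun ω (hω : δ < _) => hω.le).trans
      ((measureReal_abs_sum_range_sub_ge_le_of_isUniform h_indep hab h_unif m hδ).trans ?_)
    have h_pos : 0 < (m : ℝ) * (b - a) ^ 2 :=
      mul_pos (by exact_mod_cast hm1) (pow_pos (sub_pos.2 hab) 2)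
    gcongr 2 * exp ?_
    rw [neg_mul, neg_div, neg_div, neg_le_neg_iff]
    gcongr
  calc _ ≤ _ := measureReal_lt_biSup_le_sum _ _ hδ
    _ ≤ ∑ _m ∈ Icc 1 M, 2 * exp (-2 * δ ^ 2 / (M * (b - a) ^ 2)) := sum_le_sum h_term
    _ = _ := by rw [sum_const, Nat.card_Icc, add_tsub_cancel_right, nsmul_eq_mul]; ring

lemma measureReal_lt_iSup_abs_sum_sub_div_le_of_isUniform {N : ℝ} (hN : 0 < N)
    (h_indep : iIndepFun X μ) (h_unif : ∀ i, pdf.IsUniform (X i) (Set.Ioo 0 N⁻¹) μ) {δ : ℝ}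
    (hδ : 0 ≤ δ) :
    μ.real {ω | δ < ⨆ m ∈ Icc 1 ⌊2 * N⌋₊, |∑ i ∈ range m, X i ω - m / (2 * N)|}
      ≤ 4 * N * exp (-(δ ^ 2 * N)) := by
  have h_max := measureReal_lt_iSup_abs_sum_sub_le_of_isUniform h_indep (inv_pos.2 hN) h_unif
    ⌊2 * N⌋₊ hδ
  simp only [zero_add, sub_zero] at h_max
  simp_rw [show ∀ m : ℕ, (m : ℝ) / (2 * N) = m * (N⁻¹ / 2) from fun m => by field_simp]
  refine h_max.trans ?_
  set M := ⌊2 * N⌋₊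
  have hM : (M : ℝ) ≤ 2 * N := Nat.floor_le (by positivity)
  rcases M.eq_zero_or_pos with hM0 | hM0
  · simp only [hM0, CharP.cast_eq_zero, mul_zero, zero_mul]
    positivity
  have hM0' : (0 : ℝ) < M := by exact_mod_cast hM0
  gcongr ?_ * exp ?_
  · linarith
  · have h_ratio : (M : ℝ) / N ≤ 2 := (div_le_iff₀ hN).2 (by linarith)
    rw [neg_mul, neg_div, neg_le_neg_iff, le_div_iff₀ (by positivity)]
    calc δ ^ 2 * N * (M * N⁻¹ ^ 2) = δ ^ 2 * (M / N) := by field_simp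
      _ ≤ δ ^ 2 * 2 := by gcongr
      _ = 2 * δ ^ 2 := mul_comm _ _

end ProbabilityTheory

lemma pow_four_le_rpow_mul_rpow_sq_mul_rpow {x L : ℝ} (k q : ℝ) (hx : 1 ≤ x) (hL : 1 ≤ L)
    (hq : 0 ≤ q) :
    L ^ 4 ≤ (x ^ (q / L - k / 2) * L ^ (2 + 1 / (2 * L))) ^ 2 * x ^ k := by
  have h_lower : x ^ (-k / 2) * L ^ (2 : ℝ) ≤ x ^ (q / L - k / 2) * L ^ (2 + 1 / (2 * L)) := by
    have hL0 : 0 ≤ L := zero_le_one.trans hL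
    refine mul_le_mul (rpow_le_rpow_of_exponent_le hx ?_) (rpow_le_rpow_of_exponent_le hL ?_)
      (by positivity) (by positivity)
    · linarith [div_nonneg hq hL0]
    · linarith [div_nonneg zero_le_one (by linarith : (0 : ℝ) ≤ 2 * L)]
  have h_cancel : (x ^ (-k / 2)) ^ 2 * x ^ k = 1 := by
    rw [← rpow_natCast, ← rpow_mul (by linarith), ← rpow_add (by linarith)]
    norm_num
  calc L ^ 4 = (x ^ (-k / 2) * L ^ (2 : ℝ)) ^ 2 * x ^ k := by
        rw [mul_pow, mul_right_comm, h_cancel, rpow_two]; ring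
    _ ≤ _ := by gcongr

lemma eventually_mul_log_le_sq_mul_rpow (k q C : ℝ) (hq : 0 ≤ q) :
    ∀ᶠ n : ℕ in atTop, C * log n ≤
      ((n : ℝ) ^ (q / ⌊log n⌋₊ - k / 2) * (⌊log n⌋₊ : ℝ) ^ (2 + 1 / (2 * (⌊log n⌋₊ : ℝ)))) ^ 2
        * (n : ℝ) ^ k := by
  have h_floor : Tendsto (fun n : ℕ => ⌊log n⌋₊) atTop atTop :=
    tendsto_nat_floor_atTop.comp (tendsto_log_atTop.comp tendsto_natCast_atTop_atTop)
  filter_upwards [eventually_ge_atTop 1, h_floor.eventually_ge_atTop ⌈max 1 (2 * |C|)⌉₊]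
    with n hn hL
  set L : ℝ := (⌊log n⌋₊ : ℝ)
  have hL : max 1 (2 * |C|) ≤ L := Nat.ceil_le.1 hL
  have h_log : log n < L + 1 := Nat.lt_floor_add_one _
  refine le_trans ?_ (pow_four_le_rpow_mul_rpow_sq_mul_rpow k q (by exact_mod_cast hn)
    (le_of_max_le_left hL) hq)
  have hL1 : 1 ≤ L := le_of_max_le_left hL
  have hC : 2 * |C| ≤ L := le_of_max_le_right hL
  calc C * log n ≤ |C| * (L + 1) :=
        mul_le_mul (le_abs_self C) h_log.le (log_natCast_nonneg n) (abs_nonneg C)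
    _ ≤ L * L := by nlinarith [abs_nonneg C]
    _ ≤ L ^ 4 := by rw [← sq]; exact pow_le_pow_right₀ hL1 (by norm_num)

lemma rpow_mul_exp_neg_mul_log {x : ℝ} (hx : 0 < x) (k q : ℝ) :
    x ^ k * exp (-((k + q + 1) * log x)) = x⁻¹ * x ^ (-q) := by
  rw [rpow_def_of_pos hx, rpow_def_of_pos hx, ← exp_log (inv_pos.2 hx), log_inv, ← exp_add,
    ← exp_add]
  congr 1
  ring

theorem max_deviation_of_uniform_partial_sums_littleO_general
    {Ω : Type*} [MeasureSpace Ω] [IsProbabilityMeasure (ℙ : Measure Ω)]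
    (k q : ℝ) (hq : 0 < q)
    (γ : ℕ → ℕ → Ω → ℝ)
    (hindep : ∀ n : ℕ, iIndepFun (fun m => γ n (m + 1)) ℙ)
    (hunif : ∀ n : ℕ, 1 ≤ n → ∀ m : ℕ, 1 ≤ m →
      Measure.map (γ n m) ℙ = uniformIoo 0 ((n : ℝ) ^ (-k))) :
    ∃ K : ℝ, 0 < K ∧ ∀ δ : ℕ → ℝ,
      (∀ n, δ n = K * (n : ℝ) ^ (q / (⌊Real.log n⌋₊ : ℝ) - k / 2) *
        (⌊Real.log n⌋₊ : ℝ) ^ ((2 : ℝ) + 1 / (2 * (⌊Real.log n⌋₊ : ℝ)))) →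
      (fun n => (ℙ {ω | δ n < ⨆ m ∈ Finset.Icc 1 ⌊2 * (n : ℝ) ^ k⌋₊,
          |(∑ j ∈ Finset.Icc 1 m, γ n j ω) - (m : ℝ) / (2 * (n : ℝ) ^ k)|}).toReal)
        =o[atTop] fun n => (n : ℝ) ^ (-q) := by
  refine ⟨1, one_pos, fun δ hδ => ?_⟩
  have h_inv : (fun n : ℕ => (n : ℝ)⁻¹ * (n : ℝ) ^ (-q)) =o[atTop] fun n => (n : ℝ) ^ (-q) := by
    simpa using (isLittleO_one_iff ℝ).2 (tendsto_inv_atTop_zero.comp tendsto_natCast_atTop_atTop)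
      |>.mul_isBigO (isBigO_refl (fun n : ℕ => (n : ℝ) ^ (-q)) atTop)
  refine (IsBigO.of_bound 4 ?_).trans_isLittleO h_inv
  filter_upwards [eventually_ge_atTop 1, eventually_mul_log_le_sq_mul_rpow k q (k + q + 1) hq.le]
    with n hn h_growth
  have hn0 : (0 : ℝ) < n := by exact_mod_cast hn
  have hN : 0 < (n : ℝ) ^ k := rpow_pos_of_pos hn0 k
  have hδn : δ n = (n : ℝ) ^ (q / (⌊log n⌋₊ : ℝ) - k / 2) *
      (⌊log n⌋₊ : ℝ) ^ ((2 : ℝ) + 1 / (2 * (⌊log n⌋₊ : ℝ))) := by rw [hδ, one_mul]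
  rw [← hδn] at h_growth
  have hδ0 : 0 ≤ δ n := by rw [hδn]; positivity
  have h_unif (i : ℕ) : pdf.IsUniform (γ n (i + 1)) (Set.Ioo 0 ((n : ℝ) ^ k)⁻¹) ℙ := by
    rw [← rpow_neg hn0.le]
    exact hunif n hn (i + 1) (Nat.le_add_left 1 i)
  have h_bound := measureReal_lt_iSup_abs_sum_sub_div_le_of_isUniform hN (hindep n) h_unif hδ0
  simp_rw [sum_Icc_one_eq_sum_range, norm_mul, norm_inv, ← measureReal_def]
  rw [Real.norm_of_nonneg measureReal_nonneg, Real.norm_of_nonneg hn0.le,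
    Real.norm_of_nonneg (rpow_nonneg hn0.le _)]
  calc _ ≤ 4 * (n : ℝ) ^ k * exp (-(δ n ^ 2 * (n : ℝ) ^ k)) := h_bound
    _ ≤ 4 * (n : ℝ) ^ k * exp (-((k + q + 1) * log n)) := by gcongr
    _ = 4 * ((n : ℝ)⁻¹ * (n : ℝ) ^ (-q)) := by rw [mul_assoc, rpow_mul_exp_neg_mul_log hn0]

/-- Fix `k > 1` and `q > 0`. For each `n`, let `γ_1^n, γ_2^n, …` be
independent random variables, each uniform on `(0, n^{−k})`, and set
`Γ_m^n = γ_1^n + ⋯ + γ_m^n`. Then there is a constant `K > 0` (depending only on `q`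
and `k`) such that, with
`δ_n = K n^{q/⌊log n⌋ − k/2} (⌊log n⌋)^{2 + 1/(2⌊log n⌋)}`, the probability
`P(max_{1≤m≤⌊2n^k⌋} |Γ_m^n − m/(2n^k)| > δ_n)` is `o(n^{−q})`. -/
theorem max_deviation_of_uniform_partial_sums_littleO
    {Ω : Type*} [MeasureSpace Ω] [IsProbabilityMeasure (ℙ : Measure Ω)]
    (k q : ℝ) (hk : 1 < k) (hq : 0 < q)
    (γ : ℕ → ℕ → Ω → ℝ)
    (hmeas : ∀ n m, Measurable (γ n m))
    (hindep : ∀ n : ℕ, iIndepFun (fun m => γ n (m + 1)) ℙ)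
    (hunif : ∀ n : ℕ, 1 ≤ n → ∀ m : ℕ, 1 ≤ m →
      Measure.map (γ n m) ℙ = uniformIoo 0 ((n : ℝ) ^ (-k))) :
    ∃ K : ℝ, 0 < K ∧ ∀ δ : ℕ → ℝ,
      (∀ n, δ n = K * (n : ℝ) ^ (q / (⌊Real.log n⌋₊ : ℝ) - k / 2) *
        (⌊Real.log n⌋₊ : ℝ) ^ ((2 : ℝ) + 1 / (2 * (⌊Real.log n⌋₊ : ℝ)))) →
      (fun n => (ℙ {ω | δ n < ⨆ m ∈ Finset.Icc 1 ⌊2 * (n : ℝ) ^ k⌋₊,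
          |(∑ j ∈ Finset.Icc 1 m, γ n j ω) - (m : ℝ) / (2 * (n : ℝ) ^ k)|}).toReal)
        =o[atTop] fun n => (n : ℝ) ^ (-q) :=
  max_deviation_of_uniform_partial_sums_littleO_general k q hq γ hindep hunif
end
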